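/- Let W ∈ ℂ^{m+1} be nonzero and R ∈ (0, π/4). The function ψ_{R,W} satisfies 0 ≤ ψ_{R,W}(Z) ≤ 1/2 for every nonzero Z ∈ ℂ^{m+1}, and ψ_{R,W}(Z) = 0 whenever φ_W(Z) ≤ cos²(2R); i.e. ψ_{R,W} is a nonnegative function bounded by 1/2 that is supported in the Fubini–Study ball B_{[W]}(2R). -/

import Mathlib

open Real

/-- `phiW W Z = |⟨Z,W⟩|² / (|Z|²|W|²)`, the squared cosine of the Fubini–Study distance
between the lines `[Z]` and `[W]` in `ℂP^m`.  Here `inner ℂ W Z` is the Hermitian product,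
linear in `Z`. -/
noncomputable def phiW {m : ℕ} (W Z : EuclideanSpace ℂ (Fin (m + 1))) : ℝ :=
  ‖(inner ℂ W Z : ℂ)‖ ^ 2 / (‖Z‖ ^ 2 * ‖W‖ ^ 2)

/-- `ThetaW t W` is the ℂ-linear map `Z ↦ tZ + (1-t)(⟨Z,W⟩/|W|²)W`, i.e. the identity on
the line `ℂW` and multiplication by `t` on its orthogonal complement. -/
noncomputable def ThetaW {m : ℕ} (t : ℝ) (W Z : EuclideanSpace ℂ (Fin (m + 1))) :
    EuclideanSpace ℂ (Fin (m + 1)) :=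
  (t : ℂ) • Z + (((1 : ℂ) - (t : ℂ)) * ((inner ℂ W Z : ℂ) / ((‖W‖ : ℂ) ^ 2))) • W

/-- The cut-off function `ψ_{R,W}` supported in the Fubini–Study ball `B_{[W]}(2R)`:
`ψ_{R,W}(Z) = φ_W(Θ_{t,W} Z) − 1/2` with `t = 1/tan(2R)` if `φ_W(Z) > cos²(2R)`,
and `0` otherwise. -/
noncomputable def psiR {m : ℕ} (R : ℝ) (W Z : EuclideanSpace ℂ (Fin (m + 1))) : ℝ :=
  if (Real.cos (2 * R)) ^ 2 < phiW W Z then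
    phiW W (ThetaW (1 / Real.tan (2 * R)) W Z) - 1 / 2
  else 0

set_option maxHeartbeats 1000000

lemma core (c s a zw : ℝ) (hc : 0 < c) (hs : 0 < s) (hsc : s^2 + c^2 = 1)
    (hzw : 0 < zw) (hcs : a ≤ zw) (hlt : c^2 < a / zw) :
    1/2 ≤ a / (a + (c/s)^2 * (zw - a)) ∧ a / (a + (c/s)^2 * (zw - a)) ≤ 1 := by
  have ha : c^2 * zw < a := (lt_div_iff₀ hzw).mp hlt
  have ha0 : 0 < a := lt_of_le_of_lt (by positivity) ha
  have hkey : (c/s)^2 * (zw - a) < a := by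
    rw [div_pow, div_mul_eq_mul_div, div_lt_iff₀ (by positivity)]
    nlinarith
  have hD0 : 0 < a + (c/s)^2 * (zw - a) := by
    have : 0 ≤ (c/s)^2 * (zw - a) := mul_nonneg (by positivity) (by linarith)
    linarith
  constructor
  · rw [le_div_iff₀ hD0]; linarith
  · rw [div_le_one hD0]
    have : 0 ≤ (c/s)^2 * (zw - a) := mul_nonneg (by positivity) (by linarith)
    linarith

lemma inner_Theta {m : ℕ} (t : ℝ) (W Z : EuclideanSpace ℂ (Fin (m + 1))) (hW : W ≠ 0) :
    (inner ℂ W (ThetaW t W Z) : ℂ) = inner ℂ W Z := by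
  have hw : (‖W‖ : ℂ) ^ 2 ≠ 0 := by
    simpa using pow_ne_zero 2 (Complex.ofReal_ne_zero.mpr (norm_ne_zero_iff.mpr hW))
  simp only [ThetaW, inner_add_right, inner_smul_right, inner_self_eq_norm_sq_to_K]
  field_simp [Complex.ofReal_ne_zero.mpr (norm_ne_zero_iff.mpr hW)]
  simp; left; rw [← add_mul, add_sub_cancel, one_mul]

lemma norm_Theta {m : ℕ} (t : ℝ) (W Z : EuclideanSpace ℂ (Fin (m + 1))) (hW : W ≠ 0) :
    ‖ThetaW t W Z‖ ^ 2 * ‖W‖ ^ 2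
      = ‖(inner ℂ W Z : ℂ)‖ ^ 2 + t ^ 2 * (‖Z‖ ^ 2 * ‖W‖ ^ 2 - ‖(inner ℂ W Z : ℂ)‖ ^ 2) := by
  have hw : (‖W‖ : ℂ) ^ 2 ≠ 0 := by
    simpa using pow_ne_zero 2 (Complex.ofReal_ne_zero.mpr (norm_ne_zero_iff.mpr hW))
  have key : ((‖ThetaW t W Z‖ : ℂ)) ^ 2 * (‖W‖:ℂ) ^ 2
      = (‖(inner ℂ W Z : ℂ)‖:ℂ) ^ 2 + (t:ℂ) ^ 2 * ((‖Z‖:ℂ) ^ 2 * (‖W‖:ℂ) ^ 2 - (‖(inner ℂ W Z : ℂ)‖:ℂ) ^ 2) := by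
    have h1 : ((‖ThetaW t W Z‖ : ℂ)) ^ 2 = inner ℂ (ThetaW t W Z) (ThetaW t W Z) :=
      (inner_self_eq_norm_sq_to_K (ThetaW t W Z)).symm
    rw [h1]
    simp only [ThetaW, inner_add_left, inner_add_right, inner_smul_left, inner_smul_right,
      inner_conj_symm, map_mul, map_sub, map_one, map_div₀,
      Complex.conj_ofReal, map_pow]
    rw [inner_self_eq_norm_sq_to_K W]
    have hZ : (‖(inner ℂ W Z : ℂ)‖:ℂ)^2 = (starRingEnd ℂ) (inner ℂ W Z : ℂ) * (inner ℂ W Z:ℂ) := by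
      rw [← Complex.normSq_eq_conj_mul_self, Complex.normSq_eq_norm_sq]
      push_cast; ring
    have hZ2 : (‖Z‖:ℂ)^2 = inner ℂ Z Z := (inner_self_eq_norm_sq_to_K Z).symm
    rw [hZ, ← hZ2]
    field_simp [Complex.ofReal_ne_zero.mpr (norm_ne_zero_iff.mpr hW)]
    ring_nf
    simp [mul_comm]
    ring
  exact_mod_cast key

lemma phi_Theta {m : ℕ} (t : ℝ) (W Z : EuclideanSpace ℂ (Fin (m + 1))) (hW : W ≠ 0) :
    ‖(inner ℂ W (ThetaW t W Z) : ℂ)‖ ^ 2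
      / (‖ThetaW t W Z‖ ^ 2 * ‖W‖ ^ 2)
    = ‖(inner ℂ W Z : ℂ)‖ ^ 2
      / (‖(inner ℂ W Z : ℂ)‖ ^ 2 + t ^ 2 * (‖Z‖ ^ 2 * ‖W‖ ^ 2 - ‖(inner ℂ W Z : ℂ)‖ ^ 2)) := by
  rw [inner_Theta t W Z hW, norm_Theta t W Z hW]


/-- For `R ∈ (0, π/4)`, the function `ψ_{R,W}` satisfies `0 ≤ ψ_{R,W} ≤ 1/2` on nonzero
vectors, and vanishes whenever `φ_W(Z) ≤ cos²(2R)`; i.e. it is a nonnegative function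
bounded by `1/2` supported in the Fubini–Study ball `B_{[W]}(2R)`. -/
theorem psiR_bounds {m : ℕ} (W : EuclideanSpace ℂ (Fin (m + 1))) (hW : W ≠ 0)
    (R : ℝ) (hR : R ∈ Set.Ioo 0 (Real.pi / 4)) :
    (∀ Z : EuclideanSpace ℂ (Fin (m + 1)), Z ≠ 0 →
      0 ≤ psiR R W Z ∧ psiR R W Z ≤ 1 / 2) ∧
    (∀ Z : EuclideanSpace ℂ (Fin (m + 1)),
      phiW W Z ≤ (Real.cos (2 * R)) ^ 2 → psiR R W Z = 0) := by
  obtain ⟨hR0, hR1⟩ := hR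
  have hc : 0 < Real.cos (2 * R) :=
    Real.cos_pos_of_mem_Ioo ⟨by linarith [Real.pi_pos], by linarith⟩
  have hs : 0 < Real.sin (2 * R) :=
    Real.sin_pos_of_pos_of_lt_pi (by linarith) (by linarith [Real.pi_pos])
  have ht : 1 / Real.tan (2 * R) = Real.cos (2 * R) / Real.sin (2 * R) := by
    rw [Real.tan_eq_sin_div_cos, one_div_div]
  constructor
  · intro Z hZ
    rw [psiR]
    split_ifs with h
    · have hzw : 0 < ‖Z‖ ^ 2 * ‖W‖ ^ 2 := by
        have h1 : 0 < ‖Z‖ := norm_pos_iff.mpr hZ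
        have h2 : 0 < ‖W‖ := norm_pos_iff.mpr hW
        positivity
      have hcs : ‖(inner ℂ W Z : ℂ)‖ ^ 2 ≤ ‖Z‖ ^ 2 * ‖W‖ ^ 2 := by
        have := norm_inner_le_norm (𝕜 := ℂ) W Z
        nlinarith [norm_nonneg (inner ℂ W Z : ℂ), norm_nonneg W, norm_nonneg Z]
      have hphi : phiW W (ThetaW (1 / Real.tan (2 * R)) W Z)
          = ‖(inner ℂ W Z : ℂ)‖ ^ 2 / (‖(inner ℂ W Z : ℂ)‖ ^ 2
            + (Real.cos (2 * R) / Real.sin (2 * R)) ^ 2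
              * (‖Z‖ ^ 2 * ‖W‖ ^ 2 - ‖(inner ℂ W Z : ℂ)‖ ^ 2)) := by
        rw [phiW, phi_Theta _ W Z hW, ht]
      have hlt : (Real.cos (2 * R)) ^ 2
          < ‖(inner ℂ W Z : ℂ)‖ ^ 2 / (‖Z‖ ^ 2 * ‖W‖ ^ 2) := h
      have hcore := core (Real.cos (2 * R)) (Real.sin (2 * R)) (‖(inner ℂ W Z : ℂ)‖ ^ 2)
        (‖Z‖ ^ 2 * ‖W‖ ^ 2) hc hs (Real.sin_sq_add_cos_sq (2 * R)) hzw hcs hlt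
      rw [hphi]
      constructor
      · linarith [hcore.1]
      · linarith [hcore.2]
    · simp
  · intro Z hle
    rw [psiR, if_neg (not_lt.mpr hle)]
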